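/- arXiv:2102.04262 — 4 statements merged into one kernel-verified Lean document; each statement's English description precedes it below -/
import Mathlib

section
/- Any circular cylinder (set of points at distance at most d/2 from a line in ℝ³) that contains a regular tetrahedron of edge length 1 must have diameter d ≥ 1. -/
open scoped RealInnerProductSpace

set_option maxHeartbeats 2000000 in
theorem cylinder_containing_regular_tetrahedron_diameter_ge_one
    (v : Fin 4 → EuclideanSpace ℝ (Fin 3))
    (hdist : ∀ i j : Fin 4, i ≠ j → dist (v i) (v j) = 1)
    (p u : EuclideanSpace ℝ (Fin 3)) (hu : u ≠ 0) (d : ℝ)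
    (hcyl : ∀ i : Fin 4,
      Metric.infDist (v i) {x : EuclideanSpace ℝ (Fin 3) | ∃ t : ℝ, x = p + t • u} ≤ d / 2) :
    1 ≤ d := by
  have hnu : ‖u‖ ≠ 0 := norm_ne_zero_iff.mpr hu
  set e : EuclideanSpace ℝ (Fin 3) := ‖u‖⁻¹ • u with he
  have hee : ⟪e, e⟫ = 1 := by
    rw [he, real_inner_smul_left, real_inner_smul_right, real_inner_self_eq_norm_sq]
    field_simp
  have hd2 : ∀ i j : Fin 4, i ≠ j →
      ⟪v i, v i⟫ - 2 * ⟪v i, v j⟫ + ⟪v j, v j⟫ = 1 := by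
    intro i j hij
    have h := hdist i j hij
    rw [dist_eq_norm] at h
    have h2 : ‖v i - v j‖ ^ 2 = 1 := by rw [h]; norm_num
    rw [← real_inner_self_eq_norm_sq, inner_sub_left, inner_sub_right, inner_sub_right] at h2
    have := real_inner_comm (v i) (v j)
    linarith
  have h01 := hd2 0 1 (by decide); have h02 := hd2 0 2 (by decide)
  have h03 := hd2 0 3 (by decide); have h12 := hd2 1 2 (by decide)
  have h13 := hd2 1 3 (by decide); have h23 := hd2 2 3 (by decide)
  have c01 := real_inner_comm (v 0) (v 1); have c02 := real_inner_comm (v 0) (v 2)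
  have c03 := real_inner_comm (v 0) (v 3); have c12 := real_inner_comm (v 1) (v 2)
  have c13 := real_inner_comm (v 1) (v 3); have c23 := real_inner_comm (v 2) (v 3)
  set g : EuclideanSpace ℝ (Fin 3) := (4:ℝ)⁻¹ • (v 0 + v 1 + v 2 + v 3) with hg
  set b : Fin 4 → EuclideanSpace ℝ (Fin 3) := fun i => v i - g with hb
  have hsumb : b 0 + b 1 + b 2 + b 3 = 0 := by
    simp only [hb, hg]; module
  -- Gram entries
  have expand : ∀ i j : Fin 4, ⟪b i, b j⟫ =
      ⟪v i, v j⟫ - (4:ℝ)⁻¹ * (⟪v i, v 0⟫ + ⟪v i, v 1⟫ + ⟪v i, v 2⟫ + ⟪v i, v 3⟫)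
        - (4:ℝ)⁻¹ * (⟪v 0, v j⟫ + ⟪v 1, v j⟫ + ⟪v 2, v j⟫ + ⟪v 3, v j⟫)
        + (4:ℝ)⁻¹ * (4:ℝ)⁻¹ * (
            ⟪v 0, v 0⟫ + ⟪v 0, v 1⟫ + ⟪v 0, v 2⟫ + ⟪v 0, v 3⟫
          + ⟪v 1, v 0⟫ + ⟪v 1, v 1⟫ + ⟪v 1, v 2⟫ + ⟪v 1, v 3⟫
          + ⟪v 2, v 0⟫ + ⟪v 2, v 1⟫ + ⟪v 2, v 2⟫ + ⟪v 2, v 3⟫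
          + ⟪v 3, v 0⟫ + ⟪v 3, v 1⟫ + ⟪v 3, v 2⟫ + ⟪v 3, v 3⟫) := by
    intro i j
    simp only [hb, hg, inner_sub_left, inner_sub_right, inner_add_left, inner_add_right,
      real_inner_smul_left, real_inner_smul_right]
    ring
  have G00 : ⟪b 0, b 0⟫ = 3/8 := by rw [expand]; linarith
  have G11 : ⟪b 1, b 1⟫ = 3/8 := by rw [expand]; linarith
  have G22 : ⟪b 2, b 2⟫ = 3/8 := by rw [expand]; linarith
  have G33 : ⟪b 3, b 3⟫ = 3/8 := by rw [expand]; linarith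
  have G01 : ⟪b 0, b 1⟫ = -(1/8) := by rw [expand]; linarith
  have G02 : ⟪b 0, b 2⟫ = -(1/8) := by rw [expand]; linarith
  have G03 : ⟪b 0, b 3⟫ = -(1/8) := by rw [expand]; linarith
  have G12 : ⟪b 1, b 2⟫ = -(1/8) := by rw [expand]; linarith
  have G13 : ⟪b 1, b 3⟫ = -(1/8) := by rw [expand]; linarith
  have G23 : ⟪b 2, b 3⟫ = -(1/8) := by rw [expand]; linarith
  have G10 : ⟪b 1, b 0⟫ = -(1/8) := by rw [real_inner_comm]; exact G01
  have G20 : ⟪b 2, b 0⟫ = -(1/8) := by rw [real_inner_comm]; exact G02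
  have G30 : ⟪b 3, b 0⟫ = -(1/8) := by rw [real_inner_comm]; exact G03
  have G21 : ⟪b 2, b 1⟫ = -(1/8) := by rw [real_inner_comm]; exact G12
  have G31 : ⟪b 3, b 1⟫ = -(1/8) := by rw [real_inner_comm]; exact G13
  have G32 : ⟪b 3, b 2⟫ = -(1/8) := by rw [real_inner_comm]; exact G23
  set t : Fin 4 → ℝ := fun i => ⟪b i, e⟫ with ht
  have hsumt : t 0 + t 1 + t 2 + t 3 = 0 := by
    have h0 : ⟪b 0 + b 1 + b 2 + b 3, e⟫ = (0:ℝ) := by rw [hsumb, inner_zero_left]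
    simp only [inner_add_left] at h0
    simp only [ht]; linarith
  set z : EuclideanSpace ℝ (Fin 3) := t 0 • b 0 + t 1 • b 1 + t 2 • b 2 + t 3 • b 3 with hz
  have hze : ⟪z, e⟫ = t 0 ^ 2 + t 1 ^ 2 + t 2 ^ 2 + t 3 ^ 2 := by
    simp only [hz, inner_add_left, real_inner_smul_left, ht]; ring
  have hzz : ⟪z, z⟫ = (1/2) * (t 0 ^ 2 + t 1 ^ 2 + t 2 ^ 2 + t 3 ^ 2) := by
    simp only [hz, inner_add_left, inner_add_right, real_inner_smul_left,
      real_inner_smul_right, G00, G01, G02, G03, G10, G11, G12, G13, G20, G21, G22, G23,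
      G30, G31, G32, G33]
    linear_combination (-(1/8) * (t 0 + t 1 + t 2 + t 3)) * hsumt
  have htsum_le : t 0 ^ 2 + t 1 ^ 2 + t 2 ^ 2 + t 3 ^ 2 ≤ 1/2 := by
    set S : ℝ := t 0 ^ 2 + t 1 ^ 2 + t 2 ^ 2 + t 3 ^ 2 with hSdef
    have hcs := real_inner_mul_inner_self_le z e
    rw [hze, hzz, hee] at hcs
    by_contra hcon
    push_neg at hcon
    have hpos : 0 < S := lt_trans (by norm_num) hcon
    have hmul : S * (1/2) < S * S := by
      exact mul_lt_mul_of_pos_left hcon hpos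
    have hss : S * S = S * S := rfl
    rw [mul_one] at hcs
    linarith
  -- projections orthogonal to the axis
  set w : Fin 4 → EuclideanSpace ℝ (Fin 3) :=
    fun i => (v i - p) - ⟪v i - p, e⟫ • e with hw
  have horth : ∀ i, ⟪w i, e⟫ = 0 := by
    intro i
    simp only [hw, inner_sub_left, real_inner_smul_left, hee]; ring
  have hue : ‖u‖ • e = u := by
    rw [he, smul_smul, mul_inv_cancel₀ hnu, one_smul]
  have hSne : Set.Nonempty {x : EuclideanSpace ℝ (Fin 3) | ∃ t : ℝ, x = p + t • u} :=
    ⟨p, 0, by simp⟩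
  have hd0 : 0 ≤ d := by
    have := hcyl 0
    have h0 := Metric.infDist_nonneg (x := v 0)
      (s := {x : EuclideanSpace ℝ (Fin 3) | ∃ t : ℝ, x = p + t • u})
    linarith
  have hwle : ∀ i, ‖w i‖ ≤ d / 2 := by
    intro i
    have key : ‖w i‖ ≤ Metric.infDist (v i)
        {x : EuclideanSpace ℝ (Fin 3) | ∃ t : ℝ, x = p + t • u} := by
      by_contra hcon
      push_neg at hcon
      obtain ⟨y, hyS, hy⟩ := (Metric.infDist_lt_iff hSne).1 hcon
      obtain ⟨s, rfl⟩ := hyS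
      rw [dist_eq_norm] at hy
      have hdecomp : v i - (p + s • u) = w i + (⟪v i - p, e⟫ - s * ‖u‖) • e := by
        have h1 : (s * ‖u‖) • e = s • u := by rw [← smul_smul, hue]
        simp only [hw]
        rw [sub_smul, h1]
        module
      have hsq : ‖v i - (p + s • u)‖ ^ 2
          = ‖w i‖ ^ 2 + (⟪v i - p, e⟫ - s * ‖u‖) ^ 2 := by
        have hwe : ⟪w i, e⟫ = 0 := horth i
        have hew : ⟪e, w i⟫ = 0 := by rw [real_inner_comm]; exact hwe
        rw [hdecomp, ← real_inner_self_eq_norm_sq, ← real_inner_self_eq_norm_sq]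
        simp only [inner_add_left, inner_add_right, real_inner_smul_left,
          real_inner_smul_right, hee, hwe, hew]
        ring
      have h2 : ‖w i‖ ^ 2 ≤ ‖v i - (p + s • u)‖ ^ 2 := by
        rw [hsq]
        exact le_add_of_nonneg_right (sq_nonneg _)
      have h3 : ‖w i‖ ≤ ‖v i - (p + s • u)‖ :=
        (pow_le_pow_iff_left₀ (norm_nonneg _) (norm_nonneg _) (two_ne_zero)).1 h2
      linarith
    exact le_trans key (hcyl i)
  -- decomposition of w
  set q : EuclideanSpace ℝ (Fin 3) := (g - p) - ⟪g - p, e⟫ • e with hq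
  have hsc : ∀ i : Fin 4, ⟪v i - p, e⟫ = ⟪b i, e⟫ + ⟪g - p, e⟫ := by
    intro i
    simp only [hb, inner_sub_left]; ring
  have hwdec : ∀ i, w i = (b i - t i • e) + q := by
    intro i
    simp only [hw, hq, ht]
    rw [hsc i, add_smul]
    simp only [hb]
    module
  have hwsq : ∀ i, ‖w i‖ ^ 2
      = ⟪b i, b i⟫ - t i ^ 2 + 2 * ⟪b i, q⟫ - 2 * t i * ⟪e, q⟫ + ⟪q, q⟫ := by
    intro i
    have heb : ⟪e, b i⟫ = t i := by rw [real_inner_comm]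
    have hbe : ⟪b i, e⟫ = t i := by simp only [ht]
    have hqb : ⟪q, b i⟫ = ⟪b i, q⟫ := real_inner_comm _ _
    have hqe : ⟪q, e⟫ = ⟪e, q⟫ := real_inner_comm _ _
    rw [← real_inner_self_eq_norm_sq, hwdec i]
    simp only [inner_add_left, inner_add_right, inner_sub_left, inner_sub_right,
      real_inner_smul_left, real_inner_smul_right, hee, heb, hbe, hqb, hqe]
    ring
  have hbq : ⟪b 0, q⟫ + ⟪b 1, q⟫ + ⟪b 2, q⟫ + ⟪b 3, q⟫ = 0 := by
    have h0 : ⟪b 0 + b 1 + b 2 + b 3, q⟫ = (0:ℝ) := by rw [hsumb, inner_zero_left]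
    simp only [inner_add_left] at h0
    linarith
  have hteq : (t 0 + t 1 + t 2 + t 3) * ⟪e, q⟫ = 0 := by rw [hsumt]; ring
  have hqq : (0:ℝ) ≤ ⟪q, q⟫ := real_inner_self_nonneg
  have hsumw : (1:ℝ) ≤ ‖w 0‖ ^ 2 + ‖w 1‖ ^ 2 + ‖w 2‖ ^ 2 + ‖w 3‖ ^ 2 := by
    have e0 := hwsq 0; have e1 := hwsq 1; have e2 := hwsq 2; have e3 := hwsq 3
    have hx : t 0 * ⟪e, q⟫ + t 1 * ⟪e, q⟫ + t 2 * ⟪e, q⟫ + t 3 * ⟪e, q⟫ = 0 := by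
      linear_combination hteq
    linarith [G00, G11, G22, G33, htsum_le]
  have hwb : ∀ i, ‖w i‖ ^ 2 ≤ (d/2) ^ 2 := by
    intro i
    exact pow_le_pow_left₀ (norm_nonneg (w i)) (hwle i) 2
  have hr : (d/2) ^ 2 = d ^ 2 / 4 := by ring
  have hd2' : (1:ℝ) ^ 2 ≤ d ^ 2 := by
    have b0 := hwb 0; have b1 := hwb 1; have b2 := hwb 2; have b3 := hwb 3
    rw [hr] at b0 b1 b2 b3
    have : (1:ℝ) ^ 2 = 1 := by norm_num
    linarith
  exact (pow_le_pow_iff_left₀ zero_le_one hd0 two_ne_zero).1 hd2'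
end

section
/- Let v1, v2, v3, v4 ∈ ℝ³ satisfy ‖v_i - v_j‖ = 1 for all i ≠ j and v1+v2+v3+v4 = 0, and let u_i be the orthogonal projections of the v_i onto a 2-dimensional linear subspace h of ℝ³. Then max_i ‖u_i‖ ≥ 1/2. -/
open RealInnerProductSpace Module


private lemma aux_bessel {E : Type*} [NormedAddCommGroup E] [InnerProductSpace ℝ E]
    (n w1 w2 w3 : E) (p q r : ℝ)
    (hnn : ⟪n, n⟫ = 1)
    (h1 : ⟪n, w1⟫ = p) (h2 : ⟪n, w2⟫ = q) (h3 : ⟪n, w3⟫ = r)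
    (h11 : ⟪w1, w1⟫ = 1/2) (h22 : ⟪w2, w2⟫ = 1/2) (h33 : ⟪w3, w3⟫ = 1/2)
    (h12 : ⟪w1, w2⟫ = 0) (h13 : ⟪w1, w3⟫ = 0) (h23 : ⟪w2, w3⟫ = 0) :
    p ^ 2 + q ^ 2 + r ^ 2 ≤ 1 / 2 := by
  have h1' : ⟪w1, n⟫ = p := by rw [real_inner_comm]; exact h1
  have h2' : ⟪w2, n⟫ = q := by rw [real_inner_comm]; exact h2
  have h3' : ⟪w3, n⟫ = r := by rw [real_inner_comm]; exact h3
  have h21 : ⟪w2, w1⟫ = 0 := by rw [real_inner_comm]; exact h12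
  have h31 : ⟪w3, w1⟫ = 0 := by rw [real_inner_comm]; exact h13
  have h32 : ⟪w3, w2⟫ = 0 := by rw [real_inner_comm]; exact h23
  have hnonneg : (0:ℝ) ≤ ⟪n - (2*p) • w1 - (2*q) • w2 - (2*r) • w3,
      n - (2*p) • w1 - (2*q) • w2 - (2*r) • w3⟫ := real_inner_self_nonneg
  simp only [inner_sub_left, inner_sub_right, real_inner_smul_left, real_inner_smul_right,
    hnn, h1, h2, h3, h1', h2', h3', h11, h22, h33, h12, h13, h23, h21, h31, h32] at hnonneg
  ring_nf at hnonneg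
  nlinarith [hnonneg, sq_nonneg p, sq_nonneg q, sq_nonneg r]

set_option maxHeartbeats 1000000 in
theorem regular_tetrahedron_projection_max_norm
    (v : Fin 4 → EuclideanSpace ℝ (Fin 3))
    (hdist : ∀ i j : Fin 4, i ≠ j → ‖v i - v j‖ = 1)
    (hsum : ∑ i : Fin 4, v i = 0)
    (h : Submodule ℝ (EuclideanSpace ℝ (Fin 3)))
    (hdim : Module.finrank ℝ h = 2) :
    ∃ i : Fin 4, (1 / 2 : ℝ) ≤ ‖(Submodule.orthogonalProjection h (v i) : EuclideanSpace ℝ (Fin 3))‖ := by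
  classical
  -- Expand distance equations
  have hexp : ∀ i j : Fin 4, i ≠ j →
      ‖v i‖ ^ 2 + ‖v j‖ ^ 2 - 2 * ⟪v i, v j⟫ = 1 := by
    intro i j hij
    have h1 := hdist i j hij
    have h2 : ‖v i - v j‖ ^ 2 = 1 := by rw [h1]; norm_num
    rw [norm_sub_sq_real] at h2
    linarith
  have hsum4 : v 0 + v 1 + v 2 + v 3 = 0 := by
    have := hsum
    rwa [Fin.sum_univ_four] at this
  have hsin : ∀ k : Fin 4,
      ⟪v k, v 0⟫ + ⟪v k, v 1⟫ + ⟪v k, v 2⟫ + ⟪v k, v 3⟫ = 0 := by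
    intro k
    have : ⟪v k, v 0 + v 1 + v 2 + v 3⟫ = (0 : ℝ) := by rw [hsum4]; simp
    simpa [inner_add_right] using this
  -- Gram matrix values
  have e01 := hexp 0 1 (by decide)
  have e02 := hexp 0 2 (by decide)
  have e03 := hexp 0 3 (by decide)
  have e12 := hexp 1 2 (by decide)
  have e13 := hexp 1 3 (by decide)
  have e23 := hexp 2 3 (by decide)
  have s0 := hsin 0
  have s1 := hsin 1
  have s2 := hsin 2
  have s3 := hsin 3
  have c01 : ⟪v 1, v 0⟫ = ⟪v 0, v 1⟫ := real_inner_comm _ _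
  have c02 : ⟪v 2, v 0⟫ = ⟪v 0, v 2⟫ := real_inner_comm _ _
  have c03 : ⟪v 3, v 0⟫ = ⟪v 0, v 3⟫ := real_inner_comm _ _
  have c12 : ⟪v 2, v 1⟫ = ⟪v 1, v 2⟫ := real_inner_comm _ _
  have c13 : ⟪v 3, v 1⟫ = ⟪v 1, v 3⟫ := real_inner_comm _ _
  have c23 : ⟪v 3, v 2⟫ = ⟪v 2, v 3⟫ := real_inner_comm _ _
  have is0 : ⟪v 0, v 0⟫ = ‖v 0‖ ^ 2 := real_inner_self_eq_norm_sq _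
  have is1 : ⟪v 1, v 1⟫ = ‖v 1‖ ^ 2 := real_inner_self_eq_norm_sq _
  have is2 : ⟪v 2, v 2⟫ = ‖v 2‖ ^ 2 := real_inner_self_eq_norm_sq _
  have is3 : ⟪v 3, v 3⟫ = ‖v 3‖ ^ 2 := real_inner_self_eq_norm_sq _
  have n0 : ‖v 0‖ ^ 2 = 3 / 8 := by linarith only [e01, e02, e03, e12, e13, e23, s0, s1, s2, s3, c01, c02, c03, c12, c13, c23, is0, is1, is2, is3]
  have n1 : ‖v 1‖ ^ 2 = 3 / 8 := by linarith only [e01, e02, e03, e12, e13, e23, s0, s1, s2, s3, c01, c02, c03, c12, c13, c23, is0, is1, is2, is3]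
  have n2 : ‖v 2‖ ^ 2 = 3 / 8 := by linarith only [e01, e02, e03, e12, e13, e23, s0, s1, s2, s3, c01, c02, c03, c12, c13, c23, is0, is1, is2, is3]
  have n3 : ‖v 3‖ ^ 2 = 3 / 8 := by linarith only [e01, e02, e03, e12, e13, e23, s0, s1, s2, s3, c01, c02, c03, c12, c13, c23, is0, is1, is2, is3]
  have g01 : ⟪v 0, v 1⟫ = -(1 / 8) := by linarith only [e01, e02, e03, e12, e13, e23, s0, s1, s2, s3, c01, c02, c03, c12, c13, c23, is0, is1, is2, is3]
  have g02 : ⟪v 0, v 2⟫ = -(1 / 8) := by linarith only [e01, e02, e03, e12, e13, e23, s0, s1, s2, s3, c01, c02, c03, c12, c13, c23, is0, is1, is2, is3]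
  have g03 : ⟪v 0, v 3⟫ = -(1 / 8) := by linarith only [e01, e02, e03, e12, e13, e23, s0, s1, s2, s3, c01, c02, c03, c12, c13, c23, is0, is1, is2, is3]
  have g12 : ⟪v 1, v 2⟫ = -(1 / 8) := by linarith only [e01, e02, e03, e12, e13, e23, s0, s1, s2, s3, c01, c02, c03, c12, c13, c23, is0, is1, is2, is3]
  have g13 : ⟪v 1, v 3⟫ = -(1 / 8) := by linarith only [e01, e02, e03, e12, e13, e23, s0, s1, s2, s3, c01, c02, c03, c12, c13, c23, is0, is1, is2, is3]
  have g23 : ⟪v 2, v 3⟫ = -(1 / 8) := by linarith only [e01, e02, e03, e12, e13, e23, s0, s1, s2, s3, c01, c02, c03, c12, c13, c23, is0, is1, is2, is3]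
  -- a unit normal vector of h
  have hfr : finrank ℝ (hᗮ) = 1 := by
    have := Submodule.finrank_add_finrank_orthogonal h
    rw [hdim, finrank_euclideanSpace_fin] at this
    omega
  obtain ⟨m, hmmem, hmne⟩ : ∃ m ∈ hᗮ, m ≠ 0 := by
    have : hᗮ ≠ ⊥ := by
      intro hb
      rw [hb] at hfr
      simp at hfr
    obtain ⟨m, hm, hne⟩ := Submodule.exists_mem_ne_zero_of_ne_bot this
    exact ⟨m, hm, hne⟩
  set n : EuclideanSpace ℝ (Fin 3) := ‖m‖⁻¹ • m with hn_def
  have hnmem : n ∈ hᗮ := Submodule.smul_mem _ _ hmmem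
  have hnnorm : ‖n‖ = 1 := by
    rw [hn_def, norm_smul, norm_inv, norm_norm]
    field_simp [norm_eq_zero.not.mpr hmne]
  have hnne : n ≠ 0 := by
    intro h0
    rw [h0] at hnnorm
    simp at hnnorm
  have hspan : (ℝ ∙ n) = hᗮ := by
    apply Submodule.eq_of_le_of_finrank_eq
    · rw [Submodule.span_singleton_le_iff_mem]; exact hnmem
    · rw [finrank_span_singleton hnne, hfr]
  have hnn : ⟪n, n⟫ = 1 := by
    rw [real_inner_self_eq_norm_sq, hnnorm]; norm_num
  -- key decomposition: ‖P v i‖² = ‖v i‖² - ⟪n, v i⟫²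
  have hkey : ∀ i : Fin 4,
      ‖(Submodule.orthogonalProjection h (v i) : EuclideanSpace ℝ (Fin 3))‖ ^ 2
        = ‖v i‖ ^ 2 - ⟪n, v i⟫ ^ 2 := by
    intro i
    set u : EuclideanSpace ℝ (Fin 3) := (Submodule.orthogonalProjection h (v i) : EuclideanSpace ℝ (Fin 3)) with hu
    have hdo : v i - u ∈ hᗮ := h.sub_starProjection_mem_orthogonal (v i)
    obtain ⟨c, hc⟩ : ∃ c : ℝ, c • n = v i - u := by
      have : v i - u ∈ (ℝ ∙ n) := hspan ▸ hdo
      exact Submodule.mem_span_singleton.mp this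
    have hc : v i - u = c • n := hc.symm
    have humem : u ∈ h := (Submodule.orthogonalProjection h (v i)).2
    have hiu : ⟪u, v i - u⟫ = 0 := Submodule.inner_right_of_mem_orthogonal humem hdo
    have hnu : ⟪n, u⟫ = 0 := by
      rw [real_inner_comm]
      exact Submodule.inner_right_of_mem_orthogonal humem hnmem
    have hc' : ⟪n, v i⟫ = c := by
      have : ⟪n, v i - u⟫ = c := by rw [hc, real_inner_smul_right, hnn]; ring
      rw [inner_sub_right, hnu] at this
      linarith only [this]
    have hvsplit : ‖v i‖ ^ 2 = ‖u‖ ^ 2 + ‖v i - u‖ ^ 2 := by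
      have hvd : ‖u + (v i - u)‖ ^ 2 = ‖u‖ ^ 2 + 2 * ⟪u, v i - u⟫ + ‖v i - u‖ ^ 2 :=
        norm_add_sq_real _ _
      rw [show u + (v i - u) = v i by abel] at hvd
      rw [hvd, hiu]; ring
    have hd : ‖v i - u‖ ^ 2 = c ^ 2 := by
      rw [hc, norm_smul, hnnorm]
      simp [mul_pow, sq_abs]
    rw [hvsplit, hd, hc']
    ring
  -- Bessel-type bound: sum of squared normal components ≤ 1/2
  set a : Fin 4 → ℝ := fun i => ⟪n, v i⟫ with ha
  have hasum : a 0 + a 1 + a 2 + a 3 = 0 := by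
    have : ⟪n, v 0 + v 1 + v 2 + v 3⟫ = (0 : ℝ) := by rw [hsum4]; simp
    simpa [ha, inner_add_right] using this
  set w1 : EuclideanSpace ℝ (Fin 3) := v 0 + v 1 with hw1
  set w2 : EuclideanSpace ℝ (Fin 3) := v 0 + v 2 with hw2
  set w3 : EuclideanSpace ℝ (Fin 3) := v 0 + v 3 with hw3
  set p : ℝ := a 0 + a 1 with hp
  set q : ℝ := a 0 + a 2 with hq
  set r : ℝ := a 0 + a 3 with hr
  have key2 : p ^ 2 + q ^ 2 + r ^ 2 ≤ 1 / 2 := by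
    have hnw1 : ⟪n, w1⟫ = p := by simp [hw1, inner_add_right, hp, ha]
    have hnw2 : ⟪n, w2⟫ = q := by simp [hw2, inner_add_right, hq, ha]
    have hnw3 : ⟪n, w3⟫ = r := by simp [hw3, inner_add_right, hr, ha]
    have hw1w1 : ⟪w1, w1⟫ = 1/2 := by
      simp [hw1, inner_add_right, inner_add_left, is0, is1, c01, g01, n0, n1]; rw [norm_add_sq_real]; linarith only [n0, n1, g01]
    have hw2w2 : ⟪w2, w2⟫ = 1/2 := by
      simp [hw2, inner_add_right, inner_add_left, is0, is2, c02, g02, n0, n2]; rw [norm_add_sq_real]; linarith only [n0, n2, g02]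
    have hw3w3 : ⟪w3, w3⟫ = 1/2 := by
      simp [hw3, inner_add_right, inner_add_left, is0, is3, c03, g03, n0, n3]; rw [norm_add_sq_real]; linarith only [n0, n3, g03]
    have hw12 : ⟪w1, w2⟫ = 0 := by
      simp [hw1, hw2, inner_add_right, inner_add_left, is0, c01, c12, g01, g02, g12, n0]; linarith only [n0, g01, g02, g12]
    have hw13 : ⟪w1, w3⟫ = 0 := by
      simp [hw1, hw3, inner_add_right, inner_add_left, is0, c01, c13, g01, g03, g13, n0]; linarith only [n0, g01, g03, g13]
    have hw23 : ⟪w2, w3⟫ = 0 := by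
      simp [hw2, hw3, inner_add_right, inner_add_left, is0, c02, c23, g02, g03, g23, n0]; linarith only [n0, g02, g03, g23]
    exact aux_bessel n w1 w2 w3 p q r hnn hnw1 hnw2 hnw3 hw1w1 hw2w2 hw3w3 hw12 hw13 hw23
  have hid : p ^ 2 + q ^ 2 + r ^ 2 = a 0 ^ 2 + a 1 ^ 2 + a 2 ^ 2 + a 3 ^ 2 := by
    rw [hp, hq, hr]
    linear_combination (2 * a 0) * hasum
  have hasq : a 0 ^ 2 + a 1 ^ 2 + a 2 ^ 2 + a 3 ^ 2 ≤ 1 / 2 := by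
    rw [← hid]; exact key2
  -- conclude
  by_contra hcon
  push_neg at hcon
  have hb : ∀ i : Fin 4,
      ‖(Submodule.orthogonalProjection h (v i) : EuclideanSpace ℝ (Fin 3))‖ ^ 2 < 1 / 4 := by
    intro i
    have h1 := hcon i
    have h2 : (0:ℝ) ≤ ‖(Submodule.orthogonalProjection h (v i) : EuclideanSpace ℝ (Fin 3))‖ := norm_nonneg _
    have h3 := pow_lt_pow_left₀ h1 h2 two_ne_zero
    norm_num at h3
    exact h3
  have k0 := hkey 0
  have k1 := hkey 1
  have k2 := hkey 2
  have k3 := hkey 3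
  have b0 := hb 0
  have b1 := hb 1
  have b2 := hb 2
  have b3 := hb 3
  simp only [ha] at hasq
  linarith only [k0, k1, k2, k3, b0, b1, b2, b3, hasq, n0, n1, n2, n3]
end

section
/- Let ABCD be a rectangle in the plane with center E, and let σ be a linear contraction toward a line l through E by factor cos α ∈ [0,1] (σ fixes l and scales distances to l by cos α). Suppose B, C lie on one side of l, A, D on the other, and l intersects the ray from B through C. Writing A' = σ(A), B' = σ(B), C' = σ(C), then ∠A'C'B' ≤ ∠ACB. -/
open scoped RealInnerProductSpace
open EuclideanGeometry

set_option maxHeartbeats 1000000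

lemma parseval2 (w n u v : EuclideanSpace ℝ (Fin 2)) (hw : ‖w‖ = 1) (hn : ‖n‖ = 1)
    (hwn : ⟪w, n⟫ = 0) : ⟪u, v⟫ = ⟪u, w⟫ * ⟪v, w⟫ + ⟪u, n⟫ * ⟪v, n⟫ := by
  have hw2 : ⟪w, w⟫ = 1 := by rw [real_inner_self_eq_norm_sq, hw]; norm_num
  have hn2 : ⟪n, n⟫ = 1 := by rw [real_inner_self_eq_norm_sq, hn]; norm_num
  simp only [PiLp.inner_apply, RCLike.inner_apply, conj_trivial, Fin.sum_univ_two] at *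
  set d := w 0 * n 1 - w 1 * n 0 with hdd
  have hd : d ^ 2 = 1 := by
    linear_combination (n 0^2 + n 1^2) * hw2 + hn2 - (w 0 * n 0 + w 1 * n 1) * hwn
  have h0 : n 0 = -(w 1) * d := by
    linear_combination w 0 * hwn - n 0 * hw2
  have h1 : n 1 = w 0 * d := by
    linear_combination w 1 * hwn - n 1 * hw2
  rw [h0, h1]
  linear_combination (-(u 0 * v 0 + u 1 * v 1)) * hw2 -
    ((u 0 * w 1 - u 1 * w 0) * (v 0 * w 1 - v 1 * w 0)) * hd


private lemma sq_pos_to_pos {x : ℝ} (hx : 0 ≤ x) (h2 : 0 < x ^ 2) : 0 < x := by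
  rcases hx.lt_or_eq with h | h
  · exact h
  · exfalso; rw [← h] at h2; simp at h2

private lemma sq_le_to_le {x y : ℝ} (hx : 0 ≤ x) (hy : 0 ≤ y) (h2 : x ^ 2 ≤ y ^ 2) :
    x ≤ y := by nlinarith


private lemma ray_pos {x t y : ℝ} (h : x + t * -y = 0) (ht : 0 ≤ t) (hx : 0 < x) : 0 < y := by
  nlinarith

private lemma contr_pos {c x y : ℝ} (hx : 0 < x ^ 2) :
    0 < c ^ 2 * (x ^ 2 + y ^ 2) + (1 - c ^ 2) * x ^ 2 := by
  nlinarith [sq_nonneg (c * y)]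

private lemma contr_le {c x y : ℝ} (hc1 : c ^ 2 ≤ 1) :
    c ^ 2 * (x ^ 2 + y ^ 2) + (1 - c ^ 2) * x ^ 2 ≤ x ^ 2 + y ^ 2 := by
  nlinarith [sq_nonneg y]

private lemma num_le {c p q : ℝ} (hc1 : c ^ 2 ≤ 1) (h : p ≤ q) :
    p ≤ c ^ 2 * p + (1 - c ^ 2) * q := by nlinarith


theorem contraction_angle_decrease
    (A B C D E : EuclideanSpace ℝ (Fin 2)) (α : ℝ)
    (hα : α ∈ Set.Icc (0 : ℝ) (Real.pi / 2))
    (w nvec : EuclideanSpace ℝ (Fin 2)) (hw : ‖w‖ = 1) (hn : ‖nvec‖ = 1)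
    (hwn : ⟪w, nvec⟫ = 0)
    -- ABCD is a rectangle (in cyclic order): DA parallel-equal to CB and a right angle at A
    (hrect₁ : D - A = C - B) (hrect₂ : ⟪B - A, D - A⟫ = 0)
    (hAB : A ≠ B) (hAD : A ≠ D)
    (hE : E = midpoint ℝ A C)
    -- σ is a linear contraction toward the line l = {E + t • w} by factor cos α
    (σ : EuclideanSpace ℝ (Fin 2) → EuclideanSpace ℝ (Fin 2))
    (hσ : ∀ P : EuclideanSpace ℝ (Fin 2),
      σ P = E + ⟪P - E, w⟫ • w + Real.cos α • (P - E - ⟪P - E, w⟫ • w))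
    -- B, C lie (strictly) on one side of l, and A, D on the other
    (hB : 0 < ⟪B - E, nvec⟫) (hC : 0 < ⟪C - E, nvec⟫)
    (hA : ⟪A - E, nvec⟫ < 0) (hD : ⟪D - E, nvec⟫ < 0)
    -- l intersects the ray from B through C
    (hray : ∃ t : ℝ, 0 ≤ t ∧ ∃ s : ℝ, B + t • (C - B) = E + s • w) :
    ∠ (σ A) (σ C) (σ B) ≤ ∠ A C B := by
  have hc1 : Real.cos α ^ 2 ≤ 1 := by
    have h1 := Real.neg_one_le_cos α; have h2 := Real.cos_le_one α; nlinarith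
  set c := Real.cos α with hc
  set u := A - C with hu
  set v := B - C with hv
  have hww : ⟪w, w⟫ = 1 := by rw [real_inner_self_eq_norm_sq, hw]; norm_num
  have hdiff : ∀ P Q : EuclideanSpace ℝ (Fin 2),
      σ P - σ Q = ⟪P - Q, w⟫ • w + c • ((P - Q) - ⟪P - Q, w⟫ • w) := by
    intro P Q
    have h1 : ⟪P - Q, w⟫ = ⟪P - E, w⟫ - ⟪Q - E, w⟫ := by
      rw [← inner_sub_left]; congr 1; abel
    rw [hσ P, hσ Q, h1]
    module
  have hA' : σ A - σ C = ⟪u, w⟫ • w + c • (u - ⟪u, w⟫ • w) := hdiff A C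
  have hB' : σ B - σ C = ⟪v, w⟫ • w + c • (v - ⟪v, w⟫ • w) := hdiff B C
  have hpar_uv : ⟪u, v⟫ = ⟪u, w⟫ * ⟪v, w⟫ + ⟪u, nvec⟫ * ⟪v, nvec⟫ :=
    parseval2 w nvec u v hw hn hwn
  have hpar_uu : ⟪u, u⟫ = ⟪u, w⟫ * ⟪u, w⟫ + ⟪u, nvec⟫ * ⟪u, nvec⟫ :=
    parseval2 w nvec u u hw hn hwn
  have hpar_vv : ⟪v, v⟫ = ⟪v, w⟫ * ⟪v, w⟫ + ⟪v, nvec⟫ * ⟪v, nvec⟫ :=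
    parseval2 w nvec v v hw hn hwn
  have ha2neg : ⟪u, nvec⟫ < 0 := by
    have h : ⟪u, nvec⟫ = ⟪A - E, nvec⟫ - ⟪C - E, nvec⟫ := by
      rw [← inner_sub_left]; congr 1; rw [hu]; abel
    rw [h]; linarith
  have hb2pos : 0 < ⟪v, nvec⟫ := by
    obtain ⟨t, ht, s, heq⟩ := hray
    have h2 : (B - E) + t • (C - B) = s • w := by
      rw [show B - E + t • (C - B) = B + t • (C - B) - E by abel, heq]; abel
    have h3 : ⟪B - E, nvec⟫ + t * ⟪C - B, nvec⟫ = 0 := by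
      have h6 := congrArg (fun x => (⟪x, nvec⟫ : ℝ)) h2
      simp only [inner_add_left, real_inner_smul_left, hwn, mul_zero] at h6
      exact h6
    have h4 : ⟪C - B, nvec⟫ = -⟪v, nvec⟫ := by
      rw [← inner_neg_left]; congr 1; rw [hv]; abel
    rw [h4] at h3
    exact ray_pos h3 ht hB
  have hrect₂' : ⟪B - A, C - B⟫ = 0 := hrect₁ ▸ hrect₂
  have hABv : ⟪B - A, v⟫ = 0 := by
    rw [hv, show B - C = -(C - B) by abel, inner_neg_right, hrect₂', neg_zero]
  have huv : ⟪u, v⟫ = ⟪v, v⟫ := by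
    have h : u = -(B - A) + v := by rw [hu, hv]; abel
    rw [h, inner_add_left, inner_neg_left, hABv]; ring
  have hvne : v ≠ 0 := by
    intro h; rw [h, inner_zero_left] at hb2pos; exact lt_irrefl 0 hb2pos
  have hune : u ≠ 0 := by
    intro h; rw [h, inner_zero_left] at ha2neg; exact lt_irrefl 0 ha2neg
  have hnu : 0 < ‖u‖ := norm_pos_iff.mpr hune
  have hnv : 0 < ‖v‖ := norm_pos_iff.mpr hvne
  have hvv : 0 < ⟪v, v⟫ := by
    rw [real_inner_self_eq_norm_sq]; positivity
  have hp : 0 < ⟪u, v⟫ := huv ▸ hvv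
  have hab : ⟪u, v⟫ < ⟪u, w⟫ * ⟪v, w⟫ := by
    have h : ⟪u, nvec⟫ * ⟪v, nvec⟫ < 0 := mul_neg_of_neg_of_pos ha2neg hb2pos
    linarith [hpar_uv]
  have ha1sq : 0 < ⟪u, w⟫ ^ 2 := by
    have h : ⟪u, w⟫ ≠ 0 := by
      intro h; rw [h, zero_mul] at hab; linarith
    positivity
  have hb1sq : 0 < ⟪v, w⟫ ^ 2 := by
    have h : ⟪v, w⟫ ≠ 0 := by
      intro h; rw [h, mul_zero] at hab; linarith
    positivity
  -- inner products and norms of images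
  have hinnL : ⟪σ A - σ C, σ B - σ C⟫ = c^2 * ⟪u, v⟫ + (1 - c^2) * (⟪u, w⟫ * ⟪v, w⟫) := by
    rw [hA', hB']
    simp only [inner_add_left, inner_add_right, inner_sub_left, inner_sub_right,
      real_inner_smul_left, real_inner_smul_right, hww]
    rw [real_inner_comm w u, real_inner_comm w v]; ring
  have hnormLu : ‖σ A - σ C‖^2 = c^2 * ‖u‖^2 + (1 - c^2) * ⟪u, w⟫^2 := by
    rw [← real_inner_self_eq_norm_sq, hA']
    simp only [inner_add_left, inner_add_right, inner_sub_left, inner_sub_right,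
      real_inner_smul_left, real_inner_smul_right, hww]
    rw [real_inner_comm w u, real_inner_self_eq_norm_sq]; ring
  have hnormLv : ‖σ B - σ C‖^2 = c^2 * ‖v‖^2 + (1 - c^2) * ⟪v, w⟫^2 := by
    rw [← real_inner_self_eq_norm_sq, hB']
    simp only [inner_add_left, inner_add_right, inner_sub_left, inner_sub_right,
      real_inner_smul_left, real_inner_smul_right, hww]
    rw [real_inner_comm w v, real_inner_self_eq_norm_sq]; ring
  have hnu2 : ‖u‖^2 = ⟪u, w⟫^2 + ⟪u, nvec⟫^2 := by
    rw [← real_inner_self_eq_norm_sq, hpar_uu]; ring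
  have hnv2 : ‖v‖^2 = ⟪v, w⟫^2 + ⟪v, nvec⟫^2 := by
    rw [← real_inner_self_eq_norm_sq, hpar_vv]; ring
  have hLu2pos : 0 < ‖σ A - σ C‖^2 := by
    rw [hnormLu, hnu2]; exact contr_pos ha1sq
  have hLv2pos : 0 < ‖σ B - σ C‖^2 := by
    rw [hnormLv, hnv2]; exact contr_pos hb1sq
  have hLupos : 0 < ‖σ A - σ C‖ := sq_pos_to_pos (norm_nonneg _) hLu2pos
  have hLvpos : 0 < ‖σ B - σ C‖ := sq_pos_to_pos (norm_nonneg _) hLv2pos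
  have hLule : ‖σ A - σ C‖ ≤ ‖u‖ := by
    have h : ‖σ A - σ C‖^2 ≤ ‖u‖^2 := by
      rw [hnormLu, hnu2]; exact contr_le hc1
    exact sq_le_to_le (norm_nonneg _) (norm_nonneg _) h
  have hLvle : ‖σ B - σ C‖ ≤ ‖v‖ := by
    have h : ‖σ B - σ C‖^2 ≤ ‖v‖^2 := by
      rw [hnormLv, hnv2]; exact contr_le hc1
    exact sq_le_to_le (norm_nonneg _) (norm_nonneg _) h
  have hnumle : ⟪u, v⟫ ≤ ⟪σ A - σ C, σ B - σ C⟫ := by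
    rw [hinnL]; exact num_le hc1 hab.le
  -- conclude via arccos antitonicity
  have hAngL : ∠ (σ A) (σ C) (σ B) =
      Real.arccos (⟪σ A - σ C, σ B - σ C⟫ / (‖σ A - σ C‖ * ‖σ B - σ C‖)) := by
    simp only [EuclideanGeometry.angle, InnerProductGeometry.angle, vsub_eq_sub]
  have hAng : ∠ A C B = Real.arccos (⟪u, v⟫ / (‖u‖ * ‖v‖)) := by
    simp only [EuclideanGeometry.angle, InnerProductGeometry.angle, vsub_eq_sub, hu, hv]
  rw [hAngL, hAng]
  have hqle : ⟪u, v⟫ / (‖u‖ * ‖v‖) ≤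
      ⟪σ A - σ C, σ B - σ C⟫ / (‖σ A - σ C‖ * ‖σ B - σ C‖) := by
    apply div_le_div₀ (le_trans hp.le hnumle) hnumle (mul_pos hLupos hLvpos)
    exact mul_le_mul hLule hLvle hLvpos.le hnu.le
  rw [Real.arccos, Real.arccos]
  have := Real.monotone_arcsin hqle
  linarith
end

section
/- Consider the regular tetrahedron with vertices A, B, C, D of edge length 1, and parameters x, y ∈ (0,1) with x > y. Let U be the point on segment AC at distance x from A and V the point on segment AD at distance y from A. If the plane through B, U, V is parallel to a plane through C meeting AD at S and BD at T, then |SD| = (x−y)/x and |TD| = (x−y)/(x(1−y)). -/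
set_option maxHeartbeats 1000000

open RealInnerProductSpace

theorem parallel_cross_sections_of_regular_tetrahedron
    (A B C D : EuclideanSpace ℝ (Fin 3)) (x y : ℝ)
    (hx : x ∈ Set.Ioo (0 : ℝ) 1) (hy : y ∈ Set.Ioo (0 : ℝ) 1) (hxy : y < x)
    (hAB : dist A B = 1) (hAC : dist A C = 1) (hAD : dist A D = 1)
    (hBC : dist B C = 1) (hBD : dist B D = 1) (hCD : dist C D = 1)
    (U V S T : EuclideanSpace ℝ (Fin 3))
    (hU : U = A + x • (C - A)) (hV : V = A + y • (D - A))
    (hS : ∃ s ∈ Set.Icc (0 : ℝ) 1, S = A + s • (D - A))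
    (hT : ∃ t ∈ Set.Icc (0 : ℝ) 1, T = B + t • (D - B))
    (hpar : AffineSubspace.Parallel
      (affineSpan ℝ ({B, U, V} : Set (EuclideanSpace ℝ (Fin 3))))
      (affineSpan ℝ ({C, S, T} : Set (EuclideanSpace ℝ (Fin 3))))) :
    dist S D = (x - y) / x ∧ dist T D = (x - y) / (x * (1 - y)) := by
  obtain ⟨hx0, hx1⟩ := hx
  obtain ⟨hy0, hy1⟩ := hy
  obtain ⟨s, hs01, hSdef⟩ := hS
  obtain ⟨t, ht01, hTdef⟩ := hT
  set a := B - A with ha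
  set c := C - A with hc
  set d := D - A with hd
  -- inner product facts
  have haa : ⟪a, a⟫ = 1 := by
    have : ‖a‖ = 1 := by rw [ha, ← dist_eq_norm]; rw [dist_comm]; exact hAB
    rw [real_inner_self_eq_norm_mul_norm, this]; ring
  have hcc : ⟪c, c⟫ = 1 := by
    have : ‖c‖ = 1 := by rw [hc, ← dist_eq_norm]; rw [dist_comm]; exact hAC
    rw [real_inner_self_eq_norm_mul_norm, this]; ring
  have hdd : ⟪d, d⟫ = 1 := by
    have : ‖d‖ = 1 := by rw [hd, ← dist_eq_norm]; rw [dist_comm]; exact hAD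
    rw [real_inner_self_eq_norm_mul_norm, this]; ring
  have hnd : ‖d‖ = 1 := by rw [hd, ← dist_eq_norm, dist_comm]; exact hAD
  have hac : ⟪a, c⟫ = 1/2 := by
    have h1 : ‖a - c‖ = 1 := by
      have : a - c = B - C := by rw [ha, hc]; abel
      rw [this, ← dist_eq_norm]; exact hBC
    have h2 : ⟪a - c, a - c⟫ = 1 := by
      rw [real_inner_self_eq_norm_mul_norm, h1]; ring
    simp only [inner_sub_left, inner_sub_right] at h2
    rw [haa, hcc] at h2
    have := real_inner_comm a c
    linarith
  have had : ⟪a, d⟫ = 1/2 := by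
    have h1 : ‖a - d‖ = 1 := by
      have : a - d = B - D := by rw [ha, hd]; abel
      rw [this, ← dist_eq_norm]; exact hBD
    have h2 : ⟪a - d, a - d⟫ = 1 := by
      rw [real_inner_self_eq_norm_mul_norm, h1]; ring
    simp only [inner_sub_left, inner_sub_right] at h2
    rw [haa, hdd] at h2
    have := real_inner_comm a d
    linarith
  have hcd : ⟪c, d⟫ = 1/2 := by
    have h1 : ‖c - d‖ = 1 := by
      have : c - d = C - D := by rw [hc, hd]; abel
      rw [this, ← dist_eq_norm]; exact hCD
    have h2 : ⟪c - d, c - d⟫ = 1 := by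
      rw [real_inner_self_eq_norm_mul_norm, h1]; ring
    simp only [inner_sub_left, inner_sub_right] at h2
    rw [hcc, hdd] at h2
    have := real_inner_comm c d
    linarith
  have hca : ⟪c, a⟫ = 1/2 := by rw [real_inner_comm]; exact hac
  have hda : ⟪d, a⟫ = 1/2 := by rw [real_inner_comm]; exact had
  have hdc : ⟪d, c⟫ = 1/2 := by rw [real_inner_comm]; exact hcd
  -- direction of first plane
  have hdir : vectorSpan ℝ ({B, U, V} : Set (EuclideanSpace ℝ (Fin 3)))
      = Submodule.span ℝ {U - B, V - B} := by
    rw [vectorSpan_eq_span_vsub_set_right ℝ (show B ∈ ({B, U, V} : Set _) by simp)]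
    have himg : (· -ᵥ B) '' ({B, U, V} : Set (EuclideanSpace ℝ (Fin 3)))
        = insert 0 {U - B, V - B} := by
      simp [Set.image_insert_eq, vsub_eq_sub]
    rw [himg, Submodule.span_insert_zero]
  have hmem : ∀ P ∈ affineSpan ℝ ({C, S, T} : Set (EuclideanSpace ℝ (Fin 3))),
      ∀ Q ∈ affineSpan ℝ ({C, S, T} : Set (EuclideanSpace ℝ (Fin 3))),
      ∃ α β : ℝ, α • (U - B) + β • (V - B) = P - Q := by
    intro P hP Q hQ
    have h3 : P -ᵥ Q ∈ (affineSpan ℝ ({C, S, T} : Set (EuclideanSpace ℝ (Fin 3)))).direction :=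
      AffineSubspace.vsub_mem_direction hP hQ
    rw [← hpar.direction_eq, direction_affineSpan, hdir] at h3
    exact Submodule.mem_span_pair.mp h3
  have hCmem : C ∈ affineSpan ℝ ({C, S, T} : Set (EuclideanSpace ℝ (Fin 3))) :=
    subset_affineSpan ℝ _ (by simp)
  have hSmem : S ∈ affineSpan ℝ ({C, S, T} : Set (EuclideanSpace ℝ (Fin 3))) :=
    subset_affineSpan ℝ _ (by simp)
  have hTmem : T ∈ affineSpan ℝ ({C, S, T} : Set (EuclideanSpace ℝ (Fin 3))) :=
    subset_affineSpan ℝ _ (by simp)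
  have hUB : U - B = x • c - a := by rw [hU, ha, hc]; module
  have hVB : V - B = y • d - a := by rw [hV, ha, hd]; module
  have hSC : S - C = s • d - c := by rw [hSdef, hc, hd]; module
  have hTC : T - C = (1 - t) • a + t • d - c := by rw [hTdef, ha, hc, hd]; module
  have hx0' : x ≠ 0 := ne_of_gt hx0
  -- solve for s
  obtain ⟨α, β, heq⟩ := hmem S hSmem C hCmem
  rw [hSC, hUB, hVB] at heq
  have e1 : ⟪α • (x • c - a) + β • (y • d - a), a⟫ = ⟪s • d - c, a⟫ := by rw [heq]
  have e2 : ⟪α • (x • c - a) + β • (y • d - a), c⟫ = ⟪s • d - c, c⟫ := by rw [heq]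
  have e3 : ⟪α • (x • c - a) + β • (y • d - a), d⟫ = ⟪s • d - c, d⟫ := by rw [heq]
  simp only [inner_add_left, inner_sub_left, real_inner_smul_left,
    haa, hcc, hdd, hac, had, hcd, hca, hda, hdc] at e1 e2 e3
  have hαx : α * x = -1 := by linear_combination (-1/2 : ℝ) * (e1 + e3 - 3 * e2)
  have hβx : β * x = 1 := by linear_combination (-2*x) * (e1 - e2) - (1 + x) * hαx
  have hsx : s * x = y := by
    linear_combination (-x) * e3 + ((x-1)/2) * hαx + (y - 1/2) * hβx
  have hsval : s = y / x := by field_simp; linear_combination hsx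
  -- solve for t
  obtain ⟨α', β', heq'⟩ := hmem T hTmem C hCmem
  rw [hTC, hUB, hVB] at heq'
  have f1 : ⟪α' • (x • c - a) + β' • (y • d - a), a⟫ = ⟪(1 - t) • a + t • d - c, a⟫ := by rw [heq']
  have f2 : ⟪α' • (x • c - a) + β' • (y • d - a), c⟫ = ⟪(1 - t) • a + t • d - c, c⟫ := by rw [heq']
  have f3 : ⟪α' • (x • c - a) + β' • (y • d - a), d⟫ = ⟪(1 - t) • a + t • d - c, d⟫ := by rw [heq']
  simp only [inner_add_left, inner_sub_left, real_inner_smul_left,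
    haa, hcc, hdd, hac, had, hcd, hca, hda, hdc] at f1 f2 f3
  have hα'x : α' * x = -1 := by linear_combination (-1/2 : ℝ) * (f1 + f3 - 3 * f2)
  have hβ'x : β' * x = t * x - x + 1 := by
    linear_combination (-2*x) * (f1 - f2) - (1 + x) * hα'x
  have htval : t * (x * (1 - y)) = y * (1 - x) := by
    linear_combination (-x) * f3 + ((x-1)/2) * hα'x + (y - 1/2) * hβ'x
  constructor
  · have hSD : S - D = (s - 1) • d := by rw [hSdef, hd]; module
    rw [dist_eq_norm, hSD, norm_smul, hnd, mul_one, Real.norm_eq_abs,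
      abs_of_nonpos (by linarith [hs01.2]), hsval]
    field_simp
    ring
  · have hnDB : ‖D - B‖ = 1 := by rw [← dist_eq_norm, dist_comm]; exact hBD
    have hTD : T - D = (t - 1) • (D - B) := by rw [hTdef]; module
    rw [dist_eq_norm, hTD, norm_smul, hnDB, mul_one, Real.norm_eq_abs,
      abs_of_nonpos (by linarith [ht01.2])]
    have hxy1 : (0:ℝ) < x * (1 - y) := mul_pos hx0 (by linarith)
    rw [neg_sub, eq_div_iff (ne_of_gt hxy1)]
    linear_combination -htval
end
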